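/- Let q be an odd prime power and F = GF(q). Let W be the 4-dimensional subspace of quadratic forms over F spanned by X0^2, X0X2, X1^2 and X2^2 (the web of conics associated with the line-orbit o_{12,1}). Then among the conics of W there are exactly q+2 double lines, exactly q^2+(q−1)/2 pairs of real lines, exactly q^2−(q+1)/2 pairs of imaginary lines, and exactly q^3−q^2 nonsingular conics. -/

import Mathlib

/-!
Count vectors rather than conics: a type of conic that is closed under scaling has exactly `q - 1`
nonzero vectors per conic. The forms of the web are `z X1² + g(X0, X2)` with `g` a binary form,
and by rescaling one may take `z ∈ {0, 1}`. Their discriminant is `-z δ`, `δ` the discriminant of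
`g`; the form is a product of linear forms iff `δ` is a square (`z = 0`), resp. iff `-g` is the
square of a linear form (`z = 1`). A product `l * m` is a double line iff `l × m = 0`, i.e. iff the
principal `2 × 2` minors of the form vanish, since these are the squares of the coordinates of
`l × m`. What remains is counting binary forms by their discriminant: for `g 0 ≠ 0` the map
`g ↦ (g 0, g 1, δ)` is a bijection, and `F` has `(q - 1) / 2` nonzero squares.
-/

open Matrix

namespace Conics

/-- Coefficient vector (a0,...,a5) of the product of two linear forms
`(b0*X0+b1*X1+b2*X2)*(c0*X0+c1*X1+c2*X2)`, where the quadratic form with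
coefficient vector `a` is `a0*X0^2 + a1*X0*X1 + a2*X0*X2 + a3*X1^2 + a4*X1*X2 + a5*X2^2`. -/
def mulLin {F : Type} [Field F] (b c : Fin 3 → F) : Fin 6 → F :=
  ![b 0 * c 0, b 0 * c 1 + b 1 * c 0, b 0 * c 2 + b 2 * c 0,
    b 1 * c 1, b 1 * c 2 + b 2 * c 1, b 2 * c 2]

/-- The discriminant of the quadratic form with coefficient vector `a`. -/
def disc {F : Type} [Field F] (a : Fin 6 → F) : F :=
  4 * a 0 * a 3 * a 5 + a 1 * a 2 * a 4 - a 0 * a 4 ^ 2 - a 3 * a 2 ^ 2 - a 5 * a 1 ^ 2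

/-- `f_a` is a double line: `f_a = c * l^2` for a nonzero scalar `c` and nonzero linear form `l`. -/
def IsDoubleLine {F : Type} [Field F] (a : Fin 6 → F) : Prop :=
  ∃ (c : F) (l : Fin 3 → F), c ≠ 0 ∧ l ≠ 0 ∧ a = c • mulLin l l

/-- `f_a` is a pair of (distinct) real lines: `f_a = l1 * l2` with neither linear form a scalar
multiple of the other. -/
def IsRealPair {F : Type} [Field F] (a : Fin 6 → F) : Prop :=
  ∃ l1 l2 : Fin 3 → F, (¬ ∃ t : F, l2 = t • l1) ∧ (¬ ∃ t : F, l1 = t • l2) ∧ a = mulLin l1 l2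

/-- `f_a` is a pair of conjugate imaginary lines: singular, but not a product of two linear
forms over `F`. -/
def IsImagPair {F : Type} [Field F] (a : Fin 6 → F) : Prop :=
  disc a = 0 ∧ ¬ ∃ l1 l2 : Fin 3 → F, a = mulLin l1 l2

/-- `f_a` is a nonsingular conic. -/
def IsNonsingular {F : Type} [Field F] (a : Fin 6 → F) : Prop :=
  disc a ≠ 0

/-- The number of conics of a given type `T` in a linear system `W` (a subspace of the space of
quadratic forms, identified with `F^6`): the number of 1-dimensional subspaces `⟨a⟩` of `W`,
`a ≠ 0`, such that `f_a` has type `T`. -/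
noncomputable def numConics {F : Type} [Field F] (W : Submodule F (Fin 6 → F))
    (T : (Fin 6 → F) → Prop) : ℕ :=
  Set.ncard {P : Submodule F (Fin 6 → F) |
    ∃ a : Fin 6 → F, a ≠ 0 ∧ a ∈ W ∧ T a ∧ P = Submodule.span F {a}}

/-- The symmetric 3×3 matrix associated with a point `y` of `PG(5,q)`. -/
def M {F : Type} [Field F] (y : Fin 6 → F) : Matrix (Fin 3) (Fin 3) F :=
  !![y 0, y 1, y 2; y 1, y 3, y 4; y 2, y 4, y 5]

/-- The pairing `B(a,y) = a0*y0 + ... + a5*y5`. -/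
def Bform {F : Type} [Field F] (a y : Fin 6 → F) : F :=
  a 0 * y 0 + a 1 * y 1 + a 2 * y 2 + a 3 * y 3 + a 4 * y 4 + a 5 * y 5

/-- The squab of conics associated with a (nonzero) point `y`: the hyperplane
`{a : B(a,y) = 0}` of the space of quadratic forms. -/
def squab {F : Type} [Field F] (y : Fin 6 → F) : Submodule F (Fin 6 → F) where
  carrier := {a | Bform a y = 0}
  add_mem' := by
    intro a b ha hb
    simp only [Set.mem_setOf_eq, Bform, Pi.add_apply] at *
    linear_combination ha + hb
  zero_mem' := by simp [Bform]
  smul_mem' := by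
    intro c a ha
    simp only [Set.mem_setOf_eq, Bform, Pi.smul_apply, smul_eq_mul] at *
    linear_combination c * ha

open Finset

theorem card_filter_neg {α : Type*} [Fintype α] [InvolutiveNeg α] (P : α → Prop)
    [DecidablePred P] : #{x | P (-x)} = #{x | P x} :=
  card_nbij' Neg.neg Neg.neg (by simp [Set.MapsTo]) (by simp [Set.MapsTo])
    (fun x _ ↦ neg_neg x) (fun x _ ↦ neg_neg x)

theorem card_filter_ne_add_one {α : Type*} [Fintype α] [DecidableEq α] {P : α → Prop}
    [DecidablePred P] {a : α} (ha : P a) : #{x | x ≠ a ∧ P x} + 1 = #{x | P x} := by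
  rw [← filter_filter, filter_ne', filter_erase, card_erase_add_one (mem_filter.2 ⟨mem_univ _, ha⟩)]

theorem card_filter_ne_of_not {α : Type*} [Fintype α] [DecidableEq α] {P : α → Prop}
    [DecidablePred P] {a : α} (ha : ¬P a) : #{x | x ≠ a ∧ P x} = #{x | P x} :=
  congrArg card (filter_congr fun _ _ ↦ and_iff_right_of_imp fun hx h ↦ ha (h ▸ hx))

section Squares

variable {F : Type*} [Field F] [Fintype F] [DecidableEq F]

theorem card_nonzero_squares_add_card_nonsquares :
    #{x : F | x ≠ 0 ∧ IsSquare x} + #{x : F | ¬IsSquare x} = Fintype.card F - 1 := by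
  have hnonsq : ∀ x : F, ¬IsSquare x ↔ x ≠ 0 ∧ ¬IsSquare x :=
    fun x ↦ ⟨fun h ↦ ⟨by rintro rfl; exact h .zero, h⟩, And.right⟩
  rw [filter_congr (s := (univ : Finset F)) fun x _ ↦ hnonsq x, ← filter_filter, ← filter_filter,
    card_filter_add_card_filter_not, filter_ne', card_erase_of_mem (mem_univ _), card_univ]

-- The quadratic character `χ` is `1` on nonzero squares and `-1` on nonsquares, and `∑ χ = 0`.
theorem card_nonzero_squares_eq_card_nonsquares (hF : ringChar F ≠ 2) :
    #{x : F | x ≠ 0 ∧ IsSquare x} = #{x : F | ¬IsSquare x} := by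
  have hχ : ∀ x : F, quadraticChar F x =
      (if x ≠ 0 ∧ IsSquare x then 1 else 0) - (if ¬IsSquare x then 1 else 0) := by
    intro x
    rcases eq_or_ne x 0 with rfl | hx
    · simp
    rcases quadraticChar_dichotomy hx with h | h
    · simp [h, hx, (quadraticChar_one_iff_isSquare hx).1 h]
    · simp [h, quadraticChar_neg_one_iff_not_isSquare.1 h]
  have hsum := quadraticChar_sum_zero hF
  simp_rw [hχ, sum_sub_distrib, sum_boole] at hsum
  exact_mod_cast sub_eq_zero.1 hsum

theorem card_nonzero_squares (hF : ringChar F ≠ 2) :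
    #{x : F | x ≠ 0 ∧ IsSquare x} = (Fintype.card F - 1) / 2 := by
  have := card_nonzero_squares_add_card_nonsquares (F := F)
  rw [← card_nonzero_squares_eq_card_nonsquares hF] at this
  omega

theorem card_nonsquares (hF : ringChar F ≠ 2) :
    #{x : F | ¬IsSquare x} = (Fintype.card F - 1) / 2 := by
  rw [← card_nonzero_squares_eq_card_nonsquares hF, card_nonzero_squares hF]

theorem card_squares (hF : ringChar F ≠ 2) :
    #{x : F | IsSquare x} = (Fintype.card F - 1) / 2 + 1 := by
  rw [← card_filter_add_card_filter_not (p := fun x : F ↦ x ≠ 0), filter_filter, filter_filter]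
  simp_rw [and_comm (a := IsSquare _), card_nonzero_squares hF, not_not]
  rw [filter_congr (s := (univ : Finset F)) fun x _ ↦
    and_iff_left_of_imp fun h : x = 0 ↦ h ▸ .zero, filter_eq']
  simp

end Squares

section BinaryForms

variable {F : Type*} [Field F] [Fintype F] [DecidableEq F]

/-- The discriminant of the binary quadratic form `g 0 * X ^ 2 + g 1 * X * Y + g 2 * Y ^ 2`. -/
def binDisc (g : Fin 3 → F) : F := g 1 ^ 2 - 4 * g 0 * g 2

theorem card_filter_prod {α β : Type*} [Fintype α] [Fintype β] (P : α → Prop) (Q : β → Prop)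
    [DecidablePred P] [DecidablePred Q] :
    #{p : α × β | P p.1 ∧ Q p.2} = #{x | P x} * #{y | Q y} := by
  rw [← card_product, ← filter_product, univ_product_univ]

-- For `g 0 ≠ 0`, the coefficients `g 0`, `g 1` and the discriminant determine `g`.
theorem card_filter_binForm_of_ne_zero (h2 : (2 : F) ≠ 0) (P : (Fin 3 → F) → Prop)
    (Q : F → F → Prop) [DecidablePred P] [∀ x, DecidablePred (Q x)]
    (hQ : ∀ g, g 0 ≠ 0 → (P g ↔ Q (g 0) (binDisc g))) :
    #{g | P g ∧ g 0 ≠ 0} = Fintype.card F * #{p : F × F | p.1 ≠ 0 ∧ Q p.1 p.2} := by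
  have h4 : (4 : F) ≠ 0 := by simpa [show (4 : F) = 2 * 2 by norm_num] using h2
  have hdisc : ∀ x y d : F, x ≠ 0 → binDisc ![x, y, (y ^ 2 - d) / (4 * x)] = d := by
    intro x y d hx
    simp only [binDisc, Matrix.cons_val]
    field_simp
    ring
  rw [mul_comm, ← card_univ, ← card_product]
  refine card_nbij' (fun g ↦ ((g 0, binDisc g), g 1))
    (fun p ↦ ![p.1.1, p.2, (p.2 ^ 2 - p.1.2) / (4 * p.1.1)]) ?_ ?_ ?_ ?_ <;>
    simp only [Set.MapsTo, Set.LeftInvOn, Set.RightInvOn, mem_coe, mem_filter, mem_product,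
      mem_univ, true_and, and_true, Prod.forall]
  · exact fun g ⟨hP, hg⟩ ↦ ⟨hg, (hQ g hg).1 hP⟩
  · rintro x d y ⟨hx, hQxd⟩
    exact ⟨(hQ _ hx).2 (by simpa [hdisc x y d hx] using hQxd), hx⟩
  · rintro g ⟨-, hg⟩
    ext i
    fin_cases i
    · rfl
    · rfl
    · simp [binDisc]
      field_simp
  · rintro x d y ⟨hx, -⟩
    simp [hdisc x y d hx]

theorem card_filter_binForm_of_eq_zero (P : (Fin 3 → F) → Prop) (R : F → F → Prop)
    [DecidablePred P] [∀ y, DecidablePred (R y)]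
    (hR : ∀ g, g 0 = 0 → (P g ↔ R (g 1) (g 2))) :
    #{g | P g ∧ ¬g 0 ≠ 0} = #{p : F × F | R p.1 p.2} := by
  refine card_nbij' (fun g ↦ (g 1, g 2)) (fun p ↦ ![0, p.1, p.2]) ?_ ?_ ?_ ?_ <;>
    simp only [Set.MapsTo, Set.LeftInvOn, Set.RightInvOn, mem_coe, mem_filter, mem_univ,
      true_and, not_not, Prod.forall]
  · exact fun g ⟨hP, hg⟩ ↦ (hR g hg).1 hP
  · exact fun y w hR' ↦ ⟨(hR ![0, y, w] rfl).2 hR', rfl⟩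
  · rintro g ⟨-, hg⟩
    ext i
    fin_cases i <;> simp [hg]
  · exact fun _ _ _ ↦ rfl

theorem card_filter_binForm (h2 : (2 : F) ≠ 0) (P : (Fin 3 → F) → Prop) (Q R : F → F → Prop)
    [DecidablePred P] [∀ x, DecidablePred (Q x)] [∀ y, DecidablePred (R y)]
    (hQ : ∀ g, g 0 ≠ 0 → (P g ↔ Q (g 0) (binDisc g)))
    (hR : ∀ g, g 0 = 0 → (P g ↔ R (g 1) (g 2))) :
    #{g | P g} =
      Fintype.card F * #{p : F × F | p.1 ≠ 0 ∧ Q p.1 p.2} + #{p : F × F | R p.1 p.2} := by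
  rw [← card_filter_add_card_filter_not (s := filter P univ) (fun g ↦ g 0 ≠ 0), filter_filter,
    filter_filter, card_filter_binForm_of_ne_zero h2 P Q hQ, card_filter_binForm_of_eq_zero P R hR]

theorem card_binDisc_eq_zero (h2 : (2 : F) ≠ 0) :
    #{g : Fin 3 → F | binDisc g = 0} = Fintype.card F ^ 2 := by
  rw [card_filter_binForm h2 _ (fun _ d ↦ d = 0) (fun y _ ↦ y = 0) (fun _ _ ↦ Iff.rfl)
    (fun g hg ↦ by simp [binDisc, hg]), card_filter_prod (· ≠ 0) (· = 0)]
  have hfst : #{p : F × F | p.1 = 0} = Fintype.card F := by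
    simpa [filter_eq'] using card_filter_prod (fun y : F ↦ y = 0) (fun _ : F ↦ True)
  simp only [filter_ne', filter_eq', mem_univ, if_true, card_erase_of_mem, card_univ,
    card_singleton, mul_one, hfst]
  rw [← Nat.mul_add_one, Nat.sub_add_cancel Fintype.card_pos, sq]

theorem card_binDisc_nonzero_square (hF : ringChar F ≠ 2) :
    #{g : Fin 3 → F | binDisc g ≠ 0 ∧ IsSquare (binDisc g)} =
      Fintype.card F * (Fintype.card F - 1) * ((Fintype.card F - 1) / 2 + 1) := by
  rw [card_filter_binForm (Ring.two_ne_zero hF) _ (fun _ d ↦ d ≠ 0 ∧ IsSquare d) (fun y _ ↦ y ≠ 0)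
    (fun _ _ ↦ Iff.rfl) (fun g hg ↦ by simp [binDisc, hg, IsSquare.sq]),
    card_filter_prod (· ≠ 0) (fun d ↦ d ≠ 0 ∧ IsSquare d), card_nonzero_squares hF]
  have hfst : #{p : F × F | p.1 ≠ 0} = (Fintype.card F - 1) * Fintype.card F := by
    simpa [filter_ne'] using card_filter_prod (fun y : F ↦ y ≠ 0) (fun _ : F ↦ True)
  simp only [filter_ne', mem_univ, card_erase_of_mem, card_univ, hfst]
  ring

theorem card_binDisc_nonsquare (hF : ringChar F ≠ 2) :
    #{g : Fin 3 → F | ¬IsSquare (binDisc g)} =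
      Fintype.card F * ((Fintype.card F - 1) * ((Fintype.card F - 1) / 2)) := by
  rw [card_filter_binForm (Ring.two_ne_zero hF) _ (fun _ d ↦ ¬IsSquare d) (fun _ _ ↦ False)
    (fun _ _ ↦ Iff.rfl) (fun g hg ↦ by simp [binDisc, hg, IsSquare.sq]),
    card_filter_prod (· ≠ 0) (fun d ↦ ¬IsSquare d), card_nonsquares hF]
  simp [filter_ne']

theorem card_binDisc_eq_zero_and_isSquare_neg (hF : ringChar F ≠ 2) :
    #{g : Fin 3 → F | binDisc g = 0 ∧ IsSquare (-g 0) ∧ IsSquare (-g 2)} =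
      Fintype.card F * ((Fintype.card F - 1) / 2) + ((Fintype.card F - 1) / 2 + 1) := by
  have h2 := Ring.two_ne_zero hF
  have hQ : ∀ g : Fin 3 → F, g 0 ≠ 0 → (binDisc g = 0 ∧ IsSquare (-g 0) ∧ IsSquare (-g 2) ↔
      IsSquare (-g 0) ∧ binDisc g = 0) := by
    rintro g hg
    refine ⟨fun h ↦ ⟨h.2.1, h.1⟩, fun ⟨⟨s, hs⟩, hd⟩ ↦ ⟨hd, ⟨s, hs⟩, g 1 / (2 * s), ?_⟩⟩
    -- `-g 2 = g 1 ^ 2 / (4 * -g 0)` is a square when `-g 0` is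
    have hs0 : s ≠ 0 := by rintro rfl; exact hg (by simpa using hs)
    rw [binDisc] at hd
    field_simp
    linear_combination (-1 : F) * hd + 4 * g 2 * hs
  rw [card_filter_binForm h2 _ (fun x d ↦ IsSquare (-x) ∧ d = 0)
    (fun y w ↦ y = 0 ∧ IsSquare (-w)) hQ (fun g hg ↦ by simp [binDisc, hg])]
  simp_rw [← and_assoc]
  rw [card_filter_prod (fun x ↦ x ≠ 0 ∧ IsSquare (-x)) (· = 0), card_filter_prod (· = 0)
    (fun w ↦ IsSquare (-w)), card_filter_neg IsSquare, card_squares hF]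
  have hneg := card_filter_neg fun x : F ↦ x ≠ 0 ∧ IsSquare x
  simp only [neg_ne_zero] at hneg
  simp [hneg, card_nonzero_squares hF, filter_eq']

end BinaryForms

theorem cross_smul_self {R : Type*} [CommRing R] (t : R) (b : Fin 3 → R) : b ⨯₃ (t • b) = 0 := by
  simp [cross_self]

theorem cross_eq_zero_iff {K : Type*} [Field K] {b c : Fin 3 → K} (hb : b ≠ 0) :
    b ⨯₃ c = 0 ↔ ∃ t : K, c = t • b := by
  rw [← not_iff_not, ← Ne, crossProduct_ne_zero_iff_linearIndependent,
    LinearIndependent.pair_iff' hb]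
  simp [eq_comm]

section ConicTypes

variable {F : Type} [Field F]

def IsLinearProduct (a : Fin 6 → F) : Prop := ∃ b c : Fin 3 → F, a = mulLin b c

/-- Entry `i` is, up to the factor `-1/4`, the principal `2 × 2` minor of the symmetric matrix of
`f_a` that avoids row and column `i`. -/
def principalMinors (a : Fin 6 → F) : Fin 3 → F :=
  ![a 4 ^ 2 - 4 * a 3 * a 5, a 2 ^ 2 - 4 * a 0 * a 5, a 1 ^ 2 - 4 * a 0 * a 3]

theorem principalMinors_mulLin (b c : Fin 3 → F) :
    principalMinors (mulLin b c) = fun i ↦ (b ⨯₃ c) i ^ 2 := by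
  ext i
  fin_cases i <;> simp [principalMinors, mulLin, cross_apply] <;> ring

theorem principalMinors_mulLin_eq_zero_iff {b c : Fin 3 → F} :
    principalMinors (mulLin b c) = 0 ↔ b ⨯₃ c = 0 := by
  simp [principalMinors_mulLin, funext_iff]

theorem mulLin_smul_right (t : F) (b c : Fin 3 → F) : mulLin b (t • c) = t • mulLin b c := by
  ext i
  fin_cases i <;> simp [mulLin] <;> ring

theorem mulLin_smul_left (t : F) (b c : Fin 3 → F) : mulLin (t • b) c = t • mulLin b c := by
  ext i
  fin_cases i <;> simp [mulLin] <;> ring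

theorem isDoubleLine_iff {a : Fin 6 → F} (ha : a ≠ 0) :
    IsDoubleLine a ↔ IsLinearProduct a ∧ principalMinors a = 0 := by
  constructor
  · rintro ⟨c, l, -, -, rfl⟩
    rw [← mulLin_smul_left]
    exact ⟨⟨_, _, rfl⟩, by simp [principalMinors_mulLin_eq_zero_iff]⟩
  · rintro ⟨⟨b, c, rfl⟩, h⟩
    have hb : b ≠ 0 := by rintro rfl; exact ha (by ext i; fin_cases i <;> simp [mulLin])
    obtain ⟨t, rfl⟩ := (cross_eq_zero_iff hb).1 (principalMinors_mulLin_eq_zero_iff.1 h)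
    rw [mulLin_smul_right] at ha ⊢
    exact ⟨t, b, left_ne_zero_of_smul ha, hb, rfl⟩

theorem isRealPair_iff {a : Fin 6 → F} :
    IsRealPair a ↔ IsLinearProduct a ∧ principalMinors a ≠ 0 := by
  constructor
  · rintro ⟨b, c, hcb, hbc, rfl⟩
    refine ⟨⟨b, c, rfl⟩, fun h ↦ ?_⟩
    rw [principalMinors_mulLin_eq_zero_iff] at h
    by_cases hb : b = 0
    · exact hbc ⟨0, by simp [hb]⟩
    · exact hcb ((cross_eq_zero_iff hb).1 h)
  · rintro ⟨⟨b, c, rfl⟩, h⟩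
    rw [Ne, principalMinors_mulLin_eq_zero_iff] at h
    refine ⟨b, c, ?_, ?_, rfl⟩ <;> rintro ⟨t, rfl⟩
    · exact h (cross_smul_self t b)
    · exact h (by rw [← cross_anticomm, cross_smul_self, neg_zero])

theorem disc_smul (t : F) (a : Fin 6 → F) : disc (t • a) = t ^ 3 * disc a := by
  simp only [disc, Pi.smul_apply, smul_eq_mul]
  ring

theorem principalMinors_smul (t : F) (a : Fin 6 → F) :
    principalMinors (t • a) = t ^ 2 • principalMinors a := by
  ext i
  fin_cases i <;> simp [principalMinors] <;> ring

theorem IsLinearProduct.smul {a : Fin 6 → F} (t : F) (h : IsLinearProduct a) :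
    IsLinearProduct (t • a) := by
  obtain ⟨b, c, rfl⟩ := h
  exact ⟨t • b, c, (mulLin_smul_left t b c).symm⟩

theorem IsDoubleLine.smul {a : Fin 6 → F} {t : F} (ht : t ≠ 0) (h : IsDoubleLine a) :
    IsDoubleLine (t • a) := by
  obtain ⟨c, l, hc, hl, rfl⟩ := h
  exact ⟨t * c, l, mul_ne_zero ht hc, hl, smul_smul t c _⟩

theorem IsRealPair.smul {a : Fin 6 → F} {t : F} (ht : t ≠ 0) (h : IsRealPair a) :
    IsRealPair (t • a) := by
  rw [isRealPair_iff, principalMinors_smul] at *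
  exact ⟨h.1.smul t, smul_ne_zero (pow_ne_zero 2 ht) h.2⟩

theorem IsImagPair.smul {a : Fin 6 → F} {t : F} (ht : t ≠ 0) (h : IsImagPair a) :
    IsImagPair (t • a) := by
  refine ⟨by rw [disc_smul, h.1, mul_zero], fun hprod ↦ h.2 ?_⟩
  simpa [inv_smul_smul₀ ht, IsLinearProduct] using IsLinearProduct.smul t⁻¹ hprod

theorem IsNonsingular.smul {a : Fin 6 → F} {t : F} (ht : t ≠ 0) (h : IsNonsingular a) :
    IsNonsingular (t • a) := by
  rw [IsNonsingular, disc_smul]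
  exact mul_ne_zero (pow_ne_zero 3 ht) h

end ConicTypes

section Counting

variable {F : Type} [Field F] [Fintype F] [DecidableEq F]

-- Each conic `⟨a⟩` counted by `numConics` comes from exactly the `q - 1` vectors `u • a`, `u ∈ Fˣ`.
theorem card_sub_one_mul_numConics (W : Submodule F (Fin 6 → F)) (T : (Fin 6 → F) → Prop)
    [DecidablePred T] [DecidablePred (· ∈ W)] (hT : ∀ (t : F) a, t ≠ 0 → T a → T (t • a)) :
    (Fintype.card F - 1) * numConics W T = #{a | a ≠ 0 ∧ a ∈ W ∧ T a} := by
  set S : Finset (Fin 6 → F) := {a | a ≠ 0 ∧ a ∈ W ∧ T a}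
  have hfiber : ∀ a ∈ S, #{b ∈ S | F ∙ b = F ∙ a} = Fintype.card F - 1 := by
    intro a ha
    simp only [S, mem_filter, mem_univ, true_and] at ha
    have : {b ∈ S | F ∙ b = F ∙ a} = univ.image fun u : Fˣ ↦ u • a := by
      ext b
      simp only [S, mem_filter, mem_univ, true_and, mem_image]
      constructor
      · rintro ⟨-, hspan⟩
        exact Submodule.span_singleton_eq_span_singleton.1 hspan.symm
      · rintro ⟨u, rfl⟩
        refine ⟨⟨(smul_ne_zero_iff_ne u).2 ha.1, W.smul_of_tower_mem u ha.2.1, ?_⟩,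
          Submodule.span_singleton_group_smul_eq F u a⟩
        exact hT u a u.ne_zero ha.2.2
    have hinj : Function.Injective fun u : Fˣ ↦ u • a := fun u v huv ↦
      Units.val_injective (smul_left_injective F ha.1 huv)
    rw [this, card_image_of_injective _ hinj, card_univ, Fintype.card_units]
  have hset : {P : Submodule F (Fin 6 → F) |
      ∃ a, a ≠ 0 ∧ a ∈ W ∧ T a ∧ P = F ∙ a} = ↑(S.image fun a ↦ F ∙ a) := by
    ext P
    simp [S, eq_comm, and_assoc]
  rw [numConics, hset, Set.ncard_coe_finset, card_eq_sum_card_image (fun a ↦ F ∙ a) S,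
    sum_congr rfl fun P hP ↦ ?_, sum_const, smul_eq_mul, mul_comm]
  obtain ⟨a, ha, rfl⟩ := mem_image.1 hP
  exact hfiber a ha

end Counting

section Web

variable {F : Type} [Field F]

def web (F : Type) [Field F] : Submodule F (Fin 6 → F) where
  carrier := {a | a 1 = 0 ∧ a 4 = 0}
  add_mem' ha hb := ⟨by simp [ha.1, hb.1], by simp [ha.2, hb.2]⟩
  zero_mem' := ⟨rfl, rfl⟩
  smul_mem' _ _ ha := ⟨by simp [ha.1], by simp [ha.2]⟩

instance [DecidableEq F] : DecidablePred (· ∈ web F) :=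
  fun a ↦ decidable_of_iff (a 1 = 0 ∧ a 4 = 0) Iff.rfl

theorem span_eq_web : Submodule.span F {![1, 0, 0, 0, 0, 0], ![0, 0, 1, 0, 0, 0],
    ![0, 0, 0, 1, 0, 0], ![0, 0, 0, 0, 0, 1]} = web F := by
  refine le_antisymm (Submodule.span_le.2 ?_) fun a ⟨h1, h4⟩ ↦ ?_
  · rintro _ (rfl | rfl | rfl | rfl) <;> exact ⟨rfl, rfl⟩
  · have : a = a 0 • ![1, 0, 0, 0, 0, 0] + a 2 • ![0, 0, 1, 0, 0, 0] +
        a 3 • ![0, 0, 0, 1, 0, 0] + a 5 • ![0, 0, 0, 0, 0, 1] := by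
      ext i
      fin_cases i <;> simp [h1, h4]
    rw [this]
    refine add_mem (add_mem (add_mem ?_ ?_) ?_) ?_ <;>
      exact Submodule.smul_mem _ _ (Submodule.subset_span (by simp))

/-- The form `z * X1 ^ 2 + g(X0, X2)`, with `g` as in `binDisc`. -/
def webForm (z : F) (g : Fin 3 → F) : Fin 6 → F := ![g 0, 0, g 1, z, 0, g 2]

theorem webForm_mem_web (z : F) (g : Fin 3 → F) : webForm z g ∈ web F := ⟨rfl, rfl⟩

theorem smul_webForm (t z : F) (g : Fin 3 → F) : t • webForm z g = webForm (t * z) (t • g) := by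
  ext i
  fin_cases i <;> simp [webForm]

theorem webForm_eq_zero_iff {z : F} {g : Fin 3 → F} : webForm z g = 0 ↔ z = 0 ∧ g = 0 := by
  constructor
  · intro h
    refine ⟨by simpa [webForm] using congrFun h 3, ?_⟩
    ext i
    fin_cases i
    · simpa [webForm] using congrFun h 0
    · simpa [webForm] using congrFun h 2
    · simpa [webForm] using congrFun h 5
  · rintro ⟨rfl, rfl⟩
    ext i
    fin_cases i <;> rfl

theorem webForm_coords {a : Fin 6 → F} (ha : a ∈ web F) : webForm (a 3) ![a 0, a 2, a 5] = a := by
  ext i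
  fin_cases i <;> simp [webForm, ha.1, ha.2]

theorem disc_webForm (z : F) (g : Fin 3 → F) : disc (webForm z g) = -(z * binDisc g) := by
  simp only [disc, webForm, binDisc, Matrix.cons_val]
  ring

theorem principalMinors_webForm (z : F) (g : Fin 3 → F) :
    principalMinors (webForm z g) = ![-(4 * z * g 2), binDisc g, -(4 * g 0 * z)] := by
  ext i
  fin_cases i <;> simp [principalMinors, webForm, binDisc]

variable [Fintype F] [DecidableEq F] (T : (Fin 6 → F) → Prop) [DecidablePred T]

theorem card_web_coeff_eq_zero :
    #{a | (a ≠ 0 ∧ a ∈ web F ∧ T a) ∧ a 3 = 0} = #{g | g ≠ 0 ∧ T (webForm 0 g)} := by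
  refine card_nbij' (fun a ↦ ![a 0, a 2, a 5]) (webForm 0) ?_ ?_ ?_ ?_ <;>
    simp only [Set.MapsTo, Set.LeftInvOn, Set.RightInvOn, mem_coe, mem_filter, mem_univ,
      true_and]
  · rintro a ⟨⟨ha0, haW, haT⟩, ha3⟩
    rw [← webForm_coords haW, ha3] at ha0 haT
    exact ⟨fun hg ↦ ha0 (webForm_eq_zero_iff.2 ⟨rfl, hg⟩), haT⟩
  · rintro g ⟨hg, hgT⟩
    exact ⟨⟨fun h ↦ hg (webForm_eq_zero_iff.1 h).2, webForm_mem_web _ _, hgT⟩, rfl⟩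
  · rintro a ⟨⟨-, haW, -⟩, ha3⟩
    simpa [ha3] using webForm_coords haW
  · intro g _
    ext i
    fin_cases i <;> rfl

variable {T} in
theorem card_web_coeff_eq_of_ne_zero (hT : ∀ (t : F) a, t ≠ 0 → T a → T (t • a)) {z : F}
    (hz : z ≠ 0) : #{a | (a ≠ 0 ∧ a ∈ web F ∧ T a) ∧ a 3 = z} = #{g | T (webForm 1 g)} := by
  refine card_nbij' (fun a ↦ z⁻¹ • ![a 0, a 2, a 5]) (fun g ↦ z • webForm 1 g) ?_ ?_ ?_ ?_ <;>
    simp only [Set.MapsTo, Set.LeftInvOn, Set.RightInvOn, mem_coe, mem_filter, mem_univ,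
      true_and]
  · rintro a ⟨⟨-, haW, haT⟩, rfl⟩
    have := hT (a 3)⁻¹ _ (inv_ne_zero hz) ((webForm_coords haW).symm ▸ haT)
    rwa [smul_webForm, inv_mul_cancel₀ hz] at this
  · intro g hg
    refine ⟨⟨smul_ne_zero hz fun h ↦ one_ne_zero (webForm_eq_zero_iff.1 h).1,
      (web F).smul_mem z (webForm_mem_web _ _), hT z _ hz hg⟩, by simp [webForm]⟩
  · rintro a ⟨⟨-, haW, -⟩, rfl⟩
    rw [smul_webForm, mul_one, smul_inv_smul₀ hz, webForm_coords haW]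
  · intro g _
    ext i
    fin_cases i <;> simp [webForm, hz]

variable {T} in
theorem card_sub_one_mul_numConics_web (hT : ∀ (t : F) a, t ≠ 0 → T a → T (t • a)) :
    (Fintype.card F - 1) * numConics (web F) T =
      #{g | g ≠ 0 ∧ T (webForm 0 g)} + (Fintype.card F - 1) * #{g | T (webForm 1 g)} := by
  rw [card_sub_one_mul_numConics _ _ hT,
    card_eq_sum_card_fiberwise (f := fun a ↦ a 3) (t := univ) fun _ _ ↦ mem_univ _,
    Fintype.sum_eq_add_sum_compl 0, filter_filter, card_web_coeff_eq_zero,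
    sum_congr rfl fun z hz ↦ by
      rw [filter_filter, card_web_coeff_eq_of_ne_zero hT (by simpa using hz)],
    sum_const, card_compl, card_singleton, smul_eq_mul]

end Web

section WebConics

variable {F : Type} [Field F] {g : Fin 3 → F}

theorem isLinearProduct_webForm_zero_iff (h2 : (2 : F) ≠ 0) :
    IsLinearProduct (webForm 0 g) ↔ IsSquare (binDisc g) := by
  constructor
  · rintro ⟨b, c, h⟩
    have := congrFun (congrArg principalMinors h) 1
    rw [principalMinors_webForm, principalMinors_mulLin] at this
    exact ⟨(b ⨯₃ c) 1, by simpa [sq] using this⟩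
  · rintro ⟨d, hd⟩
    rw [binDisc] at hd
    by_cases h0 : g 0 = 0
    · exact ⟨![0, 0, 1], ![g 1, 0, g 2], by ext i; fin_cases i <;> simp [webForm, mulLin, h0]⟩
    -- `g = (g 0 X + (g 1 + d) / 2 Y) (X + (g 1 - d) / (2 g 0) Y)` with `d ^ 2 = binDisc g`
    refine ⟨![g 0, 0, (g 1 + d) / 2], ![1, 0, (g 1 - d) / (2 * g 0)], ?_⟩
    ext i
    fin_cases i <;> simp [webForm, mulLin] <;> field_simp
    · ring
    · linear_combination -hd

-- `X1 ^ 2 - (s X0 + t X2) ^ 2 = (X1 - s X0 - t X2) (X1 + s X0 + t X2)`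
theorem isLinearProduct_webForm_one_iff :
    IsLinearProduct (webForm 1 g) ↔ binDisc g = 0 ∧ IsSquare (-g 0) ∧ IsSquare (-g 2) := by
  constructor
  · rintro ⟨b, c, h⟩
    have e0 : g 0 = b 0 * c 0 := by simpa [webForm, mulLin] using congrFun h 0
    have e1 : 0 = b 0 * c 1 + b 1 * c 0 := by simpa [webForm, mulLin] using congrFun h 1
    have e2 : g 1 = b 0 * c 2 + b 2 * c 0 := by simpa [webForm, mulLin] using congrFun h 2
    have e3 : 1 = b 1 * c 1 := by simpa [webForm, mulLin] using congrFun h 3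
    have e4 : 0 = b 1 * c 2 + b 2 * c 1 := by simpa [webForm, mulLin] using congrFun h 4
    have e5 : g 2 = b 2 * c 2 := by simpa [webForm, mulLin] using congrFun h 5
    have hm : b 0 * c 2 - b 2 * c 0 = 0 := by
      linear_combination (b 0 * c 2 - b 2 * c 0) * e3 - b 0 * c 1 * e4 + b 2 * c 1 * e1
    refine ⟨?_, ⟨b 0 * c 1, ?_⟩, ⟨b 2 * c 1, ?_⟩⟩
    · rw [binDisc, e0, e2, e5]
      linear_combination (b 0 * c 2 - b 2 * c 0) * hm
    · linear_combination (-(b 0 * c 0)) * e3 + b 0 * c 1 * e1 - e0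
    · linear_combination (-(b 2 * c 2)) * e3 + b 2 * c 1 * e4 - e5
  · rintro ⟨hd, ⟨s, hs⟩, ⟨t, ht⟩⟩
    obtain ⟨s, hs, hg1⟩ : ∃ s, -g 0 = s * s ∧ g 1 = -(2 * s * t) := by
      have : (g 1 - 2 * s * t) * (g 1 + 2 * s * t) = 0 := by
        rw [binDisc] at hd
        linear_combination hd - 4 * g 2 * hs + 4 * s * s * ht
      rcases mul_eq_zero.1 this with h | h
      · exact ⟨-s, by rw [hs]; ring, by linear_combination h⟩
      · exact ⟨s, hs, by linear_combination h⟩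
    refine ⟨![-s, 1, -t], ![s, 1, t], ?_⟩
    ext i
    fin_cases i <;> simp [webForm, mulLin]
    · linear_combination -hs
    · linear_combination hg1
    · linear_combination -ht

theorem principalMinors_webForm_one_eq_zero_iff (h2 : (2 : F) ≠ 0) :
    principalMinors (webForm 1 g) = 0 ↔ g = 0 := by
  have h4 : (4 : F) ≠ 0 := by simpa [show (4 : F) = 2 * 2 by norm_num] using h2
  rw [principalMinors_webForm]
  constructor
  · intro h
    have hg0 : g 0 = 0 := by simpa [h4] using congrFun h 2
    have hg2 : g 2 = 0 := by simpa [h4] using congrFun h 0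
    have hg1 : g 1 = 0 := by simpa [binDisc, hg0] using congrFun h 1
    ext i
    fin_cases i <;> assumption
  · rintro rfl
    ext i
    fin_cases i <;> simp [binDisc]

theorem isDoubleLine_webForm_zero_iff (h2 : (2 : F) ≠ 0) (hg : g ≠ 0) :
    IsDoubleLine (webForm 0 g) ↔ binDisc g = 0 := by
  rw [isDoubleLine_iff fun h ↦ hg (webForm_eq_zero_iff.1 h).2,
    isLinearProduct_webForm_zero_iff h2, principalMinors_webForm]
  simp +contextual [funext_iff, Fin.forall_fin_succ]

theorem isDoubleLine_webForm_one_iff (h2 : (2 : F) ≠ 0) : IsDoubleLine (webForm 1 g) ↔ g = 0 := by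
  rw [isDoubleLine_iff fun h ↦ one_ne_zero (webForm_eq_zero_iff.1 h).1,
    principalMinors_webForm_one_eq_zero_iff h2, and_iff_right_of_imp]
  rintro rfl
  exact ⟨![0, 1, 0], ![0, 1, 0], by ext i; fin_cases i <;> simp [webForm, mulLin]⟩

theorem isRealPair_webForm_zero_iff (h2 : (2 : F) ≠ 0) :
    IsRealPair (webForm 0 g) ↔ binDisc g ≠ 0 ∧ IsSquare (binDisc g) := by
  rw [isRealPair_iff, isLinearProduct_webForm_zero_iff h2, principalMinors_webForm]
  simp [funext_iff, Fin.forall_fin_succ, and_comm]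

theorem isRealPair_webForm_one_iff (h2 : (2 : F) ≠ 0) :
    IsRealPair (webForm 1 g) ↔ g ≠ 0 ∧ binDisc g = 0 ∧ IsSquare (-g 0) ∧ IsSquare (-g 2) := by
  rw [isRealPair_iff, isLinearProduct_webForm_one_iff, Ne,
    principalMinors_webForm_one_eq_zero_iff h2, and_comm]

theorem isImagPair_webForm_zero_iff (h2 : (2 : F) ≠ 0) :
    IsImagPair (webForm 0 g) ↔ ¬IsSquare (binDisc g) := by
  change disc _ = 0 ∧ ¬IsLinearProduct _ ↔ _
  simp [disc_webForm, isLinearProduct_webForm_zero_iff h2]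

theorem isImagPair_webForm_one_iff :
    IsImagPair (webForm 1 g) ↔ binDisc g = 0 ∧ ¬(IsSquare (-g 0) ∧ IsSquare (-g 2)) := by
  change disc _ = 0 ∧ ¬IsLinearProduct _ ↔ _
  simp +contextual [disc_webForm, isLinearProduct_webForm_one_iff]

theorem isNonsingular_webForm_iff {z : F} :
    IsNonsingular (webForm z g) ↔ z ≠ 0 ∧ binDisc g ≠ 0 := by
  rw [IsNonsingular, disc_webForm, neg_ne_zero, mul_ne_zero_iff]

end WebConics

section Counts

variable {F : Type} [Field F] [Fintype F]

theorem exists_card_eq_two_mul_add_one (hF : ringChar F ≠ 2) :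
    ∃ k, 0 < k ∧ Fintype.card F = 2 * k + 1 := by
  have hodd := FiniteField.odd_card_of_char_ne_two hF
  have hq := Fintype.one_lt_card (α := F)
  exact ⟨Fintype.card F / 2, by omega, by omega⟩

theorem numConics_web_isDoubleLine (hF : ringChar F ≠ 2) :
    numConics (web F) IsDoubleLine = Fintype.card F + 2 := by
  classical
  have h2 := Ring.two_ne_zero hF
  have h := card_sub_one_mul_numConics_web (T := IsDoubleLine (F := F)) fun _ _ ht h ↦ h.smul ht
  rw [filter_congr (s := univ) fun g _ ↦ and_congr_right (isDoubleLine_webForm_zero_iff h2),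
    filter_congr (s := univ) fun g _ ↦ isDoubleLine_webForm_one_iff h2, filter_eq'] at h
  have h0 := card_filter_ne_add_one (P := fun g : Fin 3 → F ↦ binDisc g = 0) (a := 0)
    (by simp [binDisc])
  rw [card_binDisc_eq_zero h2] at h0
  obtain ⟨k, hk, hq⟩ := exists_card_eq_two_mul_add_one hF
  simp only [hq, Nat.add_sub_cancel, mem_univ, if_true, card_singleton] at h h0 ⊢
  apply Nat.eq_of_mul_eq_mul_left (by omega : 0 < 2 * k)
  linarith

theorem numConics_web_isRealPair (hF : ringChar F ≠ 2) :
    numConics (web F) IsRealPair = Fintype.card F ^ 2 + (Fintype.card F - 1) / 2 := by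
  classical
  have h2 := Ring.two_ne_zero hF
  have h := card_sub_one_mul_numConics_web (T := IsRealPair (F := F)) fun _ _ ht h ↦ h.smul ht
  rw [filter_congr (s := univ) fun g _ ↦ and_congr_right fun _ ↦ isRealPair_webForm_zero_iff h2,
    filter_congr (s := univ) fun g _ ↦ isRealPair_webForm_one_iff h2,
    card_filter_ne_of_not (by simp [binDisc]), card_binDisc_nonzero_square hF] at h
  have h1 := card_filter_ne_add_one
    (P := fun g : Fin 3 → F ↦ binDisc g = 0 ∧ IsSquare (-g 0) ∧ IsSquare (-g 2)) (a := 0)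
    (by simp [binDisc])
  rw [card_binDisc_eq_zero_and_isSquare_neg hF] at h1
  obtain ⟨k, hk, hq⟩ := exists_card_eq_two_mul_add_one hF
  simp only [hq, Nat.add_sub_cancel, Nat.mul_div_cancel_left k two_pos] at h h1 ⊢
  rw [show #{g : Fin 3 → F | g ≠ 0 ∧ binDisc g = 0 ∧ IsSquare (-g 0) ∧ IsSquare (-g 2)} =
    2 * k * (k + 1) by linarith] at h
  apply Nat.eq_of_mul_eq_mul_left (by omega : 0 < 2 * k)
  linarith

theorem numConics_web_isImagPair (hF : ringChar F ≠ 2) :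
    numConics (web F) IsImagPair = Fintype.card F ^ 2 - (Fintype.card F + 1) / 2 := by
  classical
  have h2 := Ring.two_ne_zero hF
  have h := card_sub_one_mul_numConics_web (T := IsImagPair (F := F)) fun _ _ ht h ↦ h.smul ht
  rw [filter_congr (s := univ) fun g _ ↦ and_congr_right fun _ ↦ isImagPair_webForm_zero_iff h2,
    filter_congr (s := univ) fun g _ ↦ isImagPair_webForm_one_iff,
    card_filter_ne_of_not (by simp [binDisc]), card_binDisc_nonsquare hF] at h
  have h1 := card_filter_add_card_filter_not (s := {g : Fin 3 → F | binDisc g = 0})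
    fun g ↦ IsSquare (-g 0) ∧ IsSquare (-g 2)
  rw [filter_filter, filter_filter, card_binDisc_eq_zero h2,
    card_binDisc_eq_zero_and_isSquare_neg hF] at h1
  obtain ⟨k, hk, hq⟩ := exists_card_eq_two_mul_add_one hF
  simp only [hq, Nat.add_sub_cancel, Nat.mul_div_cancel_left k two_pos] at h h1 ⊢
  rw [show #{g : Fin 3 → F | binDisc g = 0 ∧ ¬(IsSquare (-g 0) ∧ IsSquare (-g 2))} =
    2 * k * (k + 1) by linarith] at h
  have hN : numConics (web F) IsImagPair = 4 * k ^ 2 + 3 * k := by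
    apply Nat.eq_of_mul_eq_mul_left (by omega : 0 < 2 * k)
    linarith
  have : (2 * k + 1) ^ 2 = 4 * k ^ 2 + 4 * k + 1 := by ring
  omega

theorem numConics_web_isNonsingular (hF : ringChar F ≠ 2) :
    numConics (web F) IsNonsingular = Fintype.card F ^ 3 - Fintype.card F ^ 2 := by
  classical
  have hq := Fintype.one_lt_card (α := F)
  have h := card_sub_one_mul_numConics_web (T := IsNonsingular (F := F)) fun _ _ ht h ↦ h.smul ht
  simp only [isNonsingular_webForm_iff, ne_eq, not_true_eq_false, false_and, and_false,
    filter_false, card_empty, one_ne_zero, not_false_eq_true, true_and, zero_add] at h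
  have h1 := card_filter_add_card_filter_not (s := (univ : Finset (Fin 3 → F)))
    fun g ↦ binDisc g = 0
  rw [card_binDisc_eq_zero (Ring.two_ne_zero hF), card_univ, Fintype.card_fun,
    Fintype.card_fin] at h1
  rw [Nat.eq_of_mul_eq_mul_left (by omega) h]
  omega

end Counts

/-- conic counts of the web `(X0^2, X0X2, X1^2, X2^2)`
(line-orbit `o_{12,1}`), `q` odd. -/
theorem web_o121_conic_counts (F : Type) [Field F] [Fintype F] (q : ℕ)
    (hq : Fintype.card F = q) (hodd : Odd q) (W : Submodule F (Fin 6 → F))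
    (hW : W = Submodule.span F ({![1, 0, 0, 0, 0, 0], ![0, 0, 1, 0, 0, 0],
      ![0, 0, 0, 1, 0, 0], ![0, 0, 0, 0, 0, 1]} : Set (Fin 6 → F))) :
    numConics W IsDoubleLine = q + 2 ∧
    numConics W IsRealPair = q ^ 2 + (q - 1) / 2 ∧
    numConics W IsImagPair = q ^ 2 - (q + 1) / 2 ∧
    numConics W IsNonsingular = q ^ 3 - q ^ 2 := by
  have hF : ringChar F ≠ 2 := fun h ↦ by
    have := FiniteField.even_card_iff_char_two.1 h
    rw [hq] at this
    exact Nat.not_even_iff_odd.2 hodd (Nat.even_iff.2 this)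
  subst hq hW
  rw [span_eq_web]
  exact ⟨numConics_web_isDoubleLine hF, numConics_web_isRealPair hF,
    numConics_web_isImagPair hF, numConics_web_isNonsingular hF⟩

end Conics
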